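/- arXiv:2306.05863 — 8 statements merged into one kernel-verified Lean document; each statement's English description precedes it below -/
import Mathlib

section
/- Let B : (0,∞) → ℝ be smooth and define E(r) = (1/2)[(1−B(r))/r² + B'(r)/r − B''(r)/2]. Then E(r) = 0 for all r > 0 if and only if there exist constants b₁, b₂ ∈ ℝ such that B(r) = 1 + b₁r + b₂r² for all r > 0. -/
open Set

/-- A function with vanishing derivative on `Ioi 0` is constant there. -/
lemma const_of_deriv_zero_Ioi {f : ℝ → ℝ}
    (hd : ∀ x ∈ Ioi (0:ℝ), HasDerivAt f 0 x) {x y : ℝ}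
    (hx : x ∈ Ioi (0:ℝ)) (hy : y ∈ Ioi (0:ℝ)) : f x = f y := by
  refine (convex_Ioi (0:ℝ)).is_const_of_fderivWithin_eq_zero
    (fun z hz => ((hd z hz).differentiableAt).differentiableWithinAt) (fun z hz => ?_) hx hy
  rw [fderivWithin_of_isOpen isOpen_Ioi hz, (hd z hz).hasFDerivAt.fderiv]
  ext; simp

/-- The electric (Weyl) coefficient
`E(r) = (1/2)[(1−B)/r² + B'/r − B''/2]` vanishes on `(0,∞)` iff
`B(r) = 1 + b₁r + b₂r²` (conformal flatness). -/
theorem conformally_flat_iff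
    (B : ℝ → ℝ) (hB : ContDiffOn ℝ (⊤ : ℕ∞) B (Set.Ioi 0)) :
    (∀ r : ℝ, 0 < r →
        (1 / 2) * ((1 - B r) / r ^ 2 + deriv B r / r - deriv (deriv B) r / 2) = 0) ↔
      (∃ b1 b2 : ℝ, ∀ r : ℝ, 0 < r → B r = 1 + b1 * r + b2 * r ^ 2) := by
  -- differentiability facts
  have hB1 : ∀ r ∈ Ioi (0:ℝ), HasDerivAt B (deriv B r) r := fun r hr =>
    ((hB.contDiffAt (isOpen_Ioi.mem_nhds hr)).differentiableAt (by simp)).hasDerivAt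
  have hBd : ContDiffOn ℝ (⊤ : ℕ∞) (deriv B) (Ioi 0) := hB.deriv_of_isOpen isOpen_Ioi (by simp)
  have hB2 : ∀ r ∈ Ioi (0:ℝ), HasDerivAt (deriv B) (deriv (deriv B) r) r := fun r hr =>
    ((hBd.contDiffAt (isOpen_Ioi.mem_nhds hr)).differentiableAt (by simp)).hasDerivAt
  constructor
  · intro hE
    set g : ℝ → ℝ := fun r => (B r - 1) / r with hg
    have hg1 : ∀ r ∈ Ioi (0:ℝ),
        HasDerivAt g ((deriv B r * r - (B r - 1) * 1) / r ^ 2) r := fun r hr =>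
      ((hB1 r hr).sub_const 1).div (hasDerivAt_id r) (ne_of_gt hr)
    have hgd : ∀ r ∈ Ioi (0:ℝ), deriv g r = (deriv B r * r - (B r - 1) * 1) / r ^ 2 :=
      fun r hr => (hg1 r hr).deriv
    -- second derivative of g vanishes
    have hg2 : ∀ r ∈ Ioi (0:ℝ), HasDerivAt (deriv g) 0 r := by
      intro r hr
      have hexp := (((hB2 r hr).mul (hasDerivAt_id r)).sub
        (((hB1 r hr).sub_const 1).mul_const 1)).div (hasDerivAt_pow 2 r)
        (pow_ne_zero 2 (ne_of_gt hr))
      simp only [id_eq, Pi.sub_apply, Pi.mul_apply] at hexp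
      have hODE := hE r hr
      have hrne : r ≠ 0 := ne_of_gt hr
      field_simp at hODE
      have h0 : HasDerivAt (fun x => (deriv B x * x - (B x - 1) * 1) / x ^ 2) 0 r := by
        refine HasDerivAt.congr_deriv hexp (Eq.symm ?_)
        rw [eq_comm, div_eq_zero_iff]
        left
        linear_combination -r * hODE
      have heq : deriv g =ᶠ[nhds r] fun x => (deriv B x * x - (B x - 1) * 1) / x ^ 2 := by
        filter_upwards [isOpen_Ioi.mem_nhds hr] with x hx using hgd x hx
      exact h0.congr_of_eventuallyEq heq
    -- deriv g is constant
    set b2 : ℝ := deriv g 1 with hb2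
    have hgc : ∀ r ∈ Ioi (0:ℝ), deriv g r = b2 := fun r hr =>
      const_of_deriv_zero_Ioi hg2 hr (by norm_num)
    -- g r - b2 * r is constant
    set b1 : ℝ := g 1 - b2 with hb1
    have hgl : ∀ r ∈ Ioi (0:ℝ), g r = b1 + b2 * r := by
      intro r hr
      have hh : ∀ x ∈ Ioi (0:ℝ), HasDerivAt (fun y => g y - b2 * y) 0 x := by
        intro x hx
        have := (hg1 x hx).sub ((hasDerivAt_id x).const_mul b2)
        rw [← hgd x hx] at this
        rw [hgc x hx] at this
        exact this.congr_deriv (by ring)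
      have := const_of_deriv_zero_Ioi hh hr (show (1:ℝ) ∈ Ioi 0 by norm_num)
      rw [hb1]; linarith [this]
    refine ⟨b1, b2, fun r hr => ?_⟩
    have := hgl r hr
    rw [hg] at this
    have hrne : r ≠ 0 := ne_of_gt hr
    field_simp at this
    linear_combination this
  · rintro ⟨b1, b2, hb⟩ r hr
    have hloc : ∀ x ∈ Ioi (0:ℝ), deriv B x = b1 + 2 * b2 * x := by
      intro x hx
      have heq : B =ᶠ[nhds x] fun y => 1 + b1 * y + b2 * y ^ 2 := by
        filter_upwards [isOpen_Ioi.mem_nhds hx] with y hy using hb y hy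
      rw [heq.deriv_eq]
      have : HasDerivAt (fun y => 1 + b1 * y + b2 * y ^ 2) (b1 + 2 * b2 * x) x := by
        have := (((hasDerivAt_const x (1:ℝ)).add ((hasDerivAt_id x).const_mul b1)).add
          ((hasDerivAt_pow 2 x).const_mul b2))
        exact this.congr_deriv (by ring)
      exact this.deriv
    have hd1 : deriv B r = b1 + 2 * b2 * r := hloc r hr
    have hd2 : deriv (deriv B) r = 2 * b2 := by
      have heq : deriv B =ᶠ[nhds r] fun y => b1 + 2 * b2 * y := by
        filter_upwards [isOpen_Ioi.mem_nhds hr] with y hy using hloc y hy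
      rw [heq.deriv_eq]
      have : HasDerivAt (fun y => b1 + 2 * b2 * y) (2 * b2) r := by
        exact ((hasDerivAt_const r b1).add ((hasDerivAt_id r).const_mul (2 * b2))).congr_deriv (by ring)
      exact this.deriv
    rw [hd1, hd2, hb r hr]
    have hrne : r ≠ 0 := ne_of_gt hr
    field_simp
    ring
end

section
/- Let B : (0,∞) → ℝ be smooth and define A(r) = (1−B(r))/r² + B''(r)/2. Then A'(r) + A(r)/r = 0 for all r > 0 if and only if there exist constants b₋₁, b₁, b₂ ∈ ℝ such that B(r) = b₋₁/r + 1 + b₁r + b₂r² for all r > 0. -/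
open Set Filter Topology


lemma exists_const_of_hasDerivAt_zero (F : ℝ → ℝ)
    (h : ∀ x ∈ Set.Ioi (0:ℝ), HasDerivAt F 0 x) :
    ∃ c, ∀ x ∈ Set.Ioi (0:ℝ), F x = c := by
  refine ⟨F 1, fun x hx => ?_⟩
  refine (convex_Ioi (0:ℝ)).is_const_of_fderivWithin_eq_zero
    (fun y hy => (h y hy).differentiableAt.differentiableWithinAt)
    (fun y hy => ?_) hx (by norm_num)
  rw [fderivWithin_of_isOpen isOpen_Ioi hy, (h y hy).hasFDerivAt.fderiv]
  ext t; simp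


/-- With `A(r) = (1−B)/r² + B''/2`, the harmonic (vanishing Cotton tensor)
condition `A' + A/r = 0` on `(0,∞)` holds iff `B(r) = b₋₁/r + 1 + b₁r + b₂r²`. -/
theorem harmonic_iff
    (B : ℝ → ℝ) (hB : ContDiffOn ℝ (⊤ : ℕ∞) B (Set.Ioi 0)) :
    (∀ r : ℝ, 0 < r →
        deriv (fun s => (1 - B s) / s ^ 2 + deriv (deriv B) s / 2) r
          + ((1 - B r) / r ^ 2 + deriv (deriv B) r / 2) / r = 0) ↔
      (∃ bm1 b1 b2 : ℝ, ∀ r : ℝ, 0 < r →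
        B r = bm1 / r + 1 + b1 * r + b2 * r ^ 2) := by
  constructor
  · intro h
    set B1 : ℝ → ℝ := deriv B with hB1def
    set B2 : ℝ → ℝ := deriv B1 with hB2def
    have hBd : ∀ r ∈ Ioi (0:ℝ), HasDerivAt B (B1 r) r := fun r hr =>
      ((hB.differentiableOn (by simp)).differentiableAt (isOpen_Ioi.mem_nhds hr)).hasDerivAt
    have hB1s : ContDiffOn ℝ (⊤ : ℕ∞) B1 (Ioi 0) := hB.deriv_of_isOpen isOpen_Ioi (by simp)
    have hB1d : ∀ r ∈ Ioi (0:ℝ), HasDerivAt B1 (B2 r) r := fun r hr =>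
      ((hB1s.differentiableOn (by simp)).differentiableAt (isOpen_Ioi.mem_nhds hr)).hasDerivAt
    have hB2s : ContDiffOn ℝ (⊤ : ℕ∞) B2 (Ioi 0) := hB1s.deriv_of_isOpen isOpen_Ioi (by simp)
    have hB2d : ∀ r ∈ Ioi (0:ℝ), HasDerivAt B2 (deriv B2 r) r := fun r hr =>
      ((hB2s.differentiableOn (by simp)).differentiableAt (isOpen_Ioi.mem_nhds hr)).hasDerivAt
    set A : ℝ → ℝ := fun s => (1 - B s) / s ^ 2 + B2 s / 2 with hAdef
    have hAd : ∀ r ∈ Ioi (0:ℝ), DifferentiableAt ℝ A r := by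
      intro r hr
      have hr' : (0:ℝ) < r := hr
      exact (((differentiableAt_const 1).sub (hBd r hr).differentiableAt).div
        (differentiableAt_id.pow 2) (pow_ne_zero 2 hr'.ne')).add
        ((hB2d r hr).differentiableAt.div_const 2)
    -- Step 1: r * A r is constant
    have h0 : ∀ r ∈ Ioi (0:ℝ), HasDerivAt (fun s => s * A s) 0 r := by
      intro r hr
      have hr' : (0:ℝ) < r := hr
      have hAr := (hAd r hr).hasDerivAt
      have hmul := (hasDerivAt_id r).mul hAr
      have heq := h r hr'
      have hdA : deriv A r = -(A r / r) := by
        simp only [hAdef, hB2def, hB1def] at heq ⊢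
        linarith
      refine hmul.congr_deriv ?_
      rw [hdA, id_eq]
      rw [mul_neg, mul_div_assoc', mul_comm r (A r), mul_div_assoc,
        div_self hr'.ne', mul_one]
      ring
    obtain ⟨c, hc⟩ := exists_const_of_hasDerivAt_zero _ h0
    -- key equation
    have hE : ∀ r ∈ Ioi (0:ℝ), B2 r * r ^ 2 = 2 * c * r + 2 * (B r - 1) := by
      intro r hr
      have hr' : (0:ℝ) < r := hr
      have h1 : A r = c / r := by
        rw [eq_div_iff hr'.ne', mul_comm]; exact hc r hr
      simp only [hAdef] at h1
      field_simp at h1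
      have h2 : r * (B2 r * r ^ 2) = r * (2 * c * r + 2 * (B r - 1)) := by
        linear_combination r * h1
      exact mul_left_cancel₀ hr'.ne' h2
    -- Step 2
    have h2 : ∀ r ∈ Ioi (0:ℝ), HasDerivAt
        (fun s => s ^ 2 * B1 s - c * s ^ 2 - 2 * s * B s + 2 * s) 0 r := by
      intro r hr
      have hr' : (0:ℝ) < r := hr
      have hd3 := ((((hasDerivAt_pow 2 r).mul (hB1d r hr)).sub
          ((hasDerivAt_pow 2 r).const_mul c)).sub
          (((hasDerivAt_id r).const_mul 2).mul (hBd r hr))).add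
          ((hasDerivAt_id r).const_mul 2)
      simp only [id_eq] at hd3
      refine hd3.congr_deriv ?_
      push_cast
      linear_combination (hE r hr)
    obtain ⟨k, hk⟩ := exists_const_of_hasDerivAt_zero _ h2
    have hB1v : ∀ r ∈ Ioi (0:ℝ), B1 r = (k + c * r ^ 2 + 2 * r * B r - 2 * r) / r ^ 2 := by
      intro r hr
      have hr' : (0:ℝ) < r := hr
      have := hk r hr
      field_simp
      linear_combination this
    -- Step 3
    have h3 : ∀ r ∈ Ioi (0:ℝ), HasDerivAt
        (fun s => (B s - 1 + c * s) / s ^ 2 + (k / 3) * (s ^ 3)⁻¹) 0 r := by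
      intro r hr
      have hr' : (0:ℝ) < r := hr
      have hnum : HasDerivAt (fun s : ℝ => B s - 1 + c * s) (B1 r + c) r := by
        have := ((hBd r hr).sub_const 1).add ((hasDerivAt_id r).const_mul c)
        simp only [id_eq] at this
        refine this.congr_deriv ?_; ring
      have hq := hnum.div (hasDerivAt_pow 2 r) (pow_ne_zero 2 hr'.ne')
      have hi := ((hasDerivAt_pow 3 r).inv (pow_ne_zero 3 hr'.ne')).const_mul (k / 3)
      have hd := hq.add hi
      refine hd.congr_deriv ?_
      rw [hB1v r hr]
      push_cast
      field_simp
      ring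
    obtain ⟨m, hm⟩ := exists_const_of_hasDerivAt_zero _ h3
    refine ⟨-(k / 3), -c, m, fun r hr => ?_⟩
    have hr' : (0:ℝ) < r := hr
    have this1 := hm r hr
    field_simp at this1
    have key : (3 * r ^ 3) * B r = (3 * r ^ 3) * (-(k / 3) / r + 1 + -c * r + m * r ^ 2) := by
      field_simp
      linear_combination this1
    exact mul_left_cancel₀ (by positivity) key
  · rintro ⟨bm1, b1, b2, hBg⟩
    set g : ℝ → ℝ := fun s => bm1 / s + 1 + b1 * s + b2 * s ^ 2 with hg
    set g1 : ℝ → ℝ := fun s => -bm1 / s ^ 2 + b1 + 2 * b2 * s with hg1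
    have hgd : ∀ s : ℝ, 0 < s → HasDerivAt g (g1 s) s := by
      intro s hs
      have h1 : HasDerivAt (fun x : ℝ => bm1 / x) (-bm1 / s ^ 2) s := by
        have := (hasDerivAt_inv hs.ne').const_mul bm1
        have hfun : (fun x : ℝ => bm1 / x) = fun x => bm1 * x⁻¹ := by
          funext x; rw [div_eq_mul_inv]
        rw [hfun]
        refine this.congr_deriv ?_
        field_simp
      have h2 := ((h1.add_const 1).add ((hasDerivAt_id s).const_mul b1)).add
        ((hasDerivAt_pow 2 s).const_mul b2)
      simp only [id_eq] at h2
      refine h2.congr_deriv ?_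
      simp [hg1]; push_cast; ring
    have hg1d : ∀ s : ℝ, 0 < s → HasDerivAt g1 (2 * bm1 / s ^ 3 + 2 * b2) s := by
      intro s hs
      have h1 := ((hasDerivAt_pow 2 s).inv (by positivity)).const_mul (-bm1)
      have h2 := (h1.add_const b1).add ((hasDerivAt_id s).const_mul (2 * b2))
      simp only [id_eq] at h2
      have hfun : g1 = fun x : ℝ => -bm1 * (x ^ 2)⁻¹ + b1 + 2 * b2 * x := by
        funext x; simp only [hg1, div_eq_mul_inv]
      rw [hfun]
      refine h2.congr_deriv ?_
      field_simp
      ring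
    intro r hr
    have hmem : Ioi (0:ℝ) ∈ 𝓝 r := isOpen_Ioi.mem_nhds hr
    have hderivB : ∀ x : ℝ, 0 < x → deriv B x = g1 x := by
      intro x hx
      have hev' : B =ᶠ[𝓝 x] g :=
        eventually_of_mem (isOpen_Ioi.mem_nhds hx) (fun y hy => hBg y hy)
      rw [hev'.deriv_eq, (hgd x hx).deriv]
    have hderiv2 : ∀ x : ℝ, 0 < x → deriv (deriv B) x = 2 * bm1 / x ^ 3 + 2 * b2 := by
      intro x hx
      have hev2' : deriv B =ᶠ[𝓝 x] g1 :=
        eventually_of_mem (isOpen_Ioi.mem_nhds hx) (fun y hy => hderivB y hy)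
      rw [hev2'.deriv_eq, (hg1d x hx).deriv]
    have hA : ∀ x : ℝ, 0 < x → (1 - B x) / x ^ 2 + deriv (deriv B) x / 2 = -b1 / x := by
      intro x hx
      rw [hderiv2 x hx, hBg x hx]
      field_simp
      ring
    have hevA : (fun s => (1 - B s) / s ^ 2 + deriv (deriv B) s / 2) =ᶠ[𝓝 r]
        (fun s => -b1 / s) := eventually_of_mem hmem (fun x hx => hA x hx)
    have hdA : HasDerivAt (fun s : ℝ => -b1 / s) (b1 / r ^ 2) r := by
      have := (hasDerivAt_inv hr.ne').const_mul (-b1)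
      have hfun : (fun s : ℝ => -b1 / s) = fun s => -b1 * s⁻¹ := by
        funext x; rw [div_eq_mul_inv]
      rw [hfun]
      refine this.congr_deriv ?_
      field_simp
    rw [hevA.deriv_eq, hdA.deriv, hA r hr]
    field_simp
    ring
end

section
/- Let B : (0,∞) → ℝ be smooth, A(r) = (1−B(r))/r² + B''(r)/2, and K(r) = A'(r) + A(r)/r. Define c₁(r) = (1/3)K(r)(2B'(r)+5B(r)/r) + B(r)K'(r), c₂(r) = (1/3)K(r)(B'(r)+B(r)/r) + (1/3)B(r)K'(r), and c₃(r) = (1/3)K(r)(−2B'(r)+B(r)/r) − (1/3)B(r)K'(r). Then c₁, c₂ and c₃ vanish identically on (0,∞) if and only if either there exist b₋₁, b₁, b₂ ∈ ℝ with B(r) = b₋₁/r + 1 + b₁r + b₂r² for all r > 0, or there exists κ ∈ ℝ with B(r) = κr² for all r > 0. -/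
open Set Filter

private lemma const_of_hasDerivAt_zero {f : ℝ → ℝ}
    (h : ∀ x ∈ Set.Ioi (0:ℝ), HasDerivAt f 0 x) {x : ℝ} (hx : 0 < x) : f x = f 1 := by
  apply (convex_Ioi (0:ℝ)).is_const_of_fderivWithin_eq_zero
    (fun y hy => (h y hy).differentiableAt.differentiableWithinAt)
    (fun y hy => ?_) hx (by norm_num)
  rw [fderivWithin_of_isOpen isOpen_Ioi hy, (h y hy).hasFDerivAt.fderiv]
  ext t; simp

/-- The three scalar coefficients `c₁, c₂, c₃` of the divergence of the
Cotton tensor vanish identically on `(0,∞)` iff `B(r) = b₋₁/r + 1 + b₁r + b₂r²`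
(harmonic) or `B(r) = κr²` (bi-harmonic). -/
theorem biharmonic_iff
    (B A K c₁ c₂ c₃ : ℝ → ℝ)
    (hB : ContDiffOn ℝ (⊤ : ℕ∞) B (Set.Ioi 0))
    (hA : ∀ r : ℝ, 0 < r → A r = (1 - B r) / r ^ 2 + deriv (deriv B) r / 2)
    (hK : ∀ r : ℝ, 0 < r → K r = deriv A r + A r / r)
    (hc1 : ∀ r : ℝ, 0 < r →
      c₁ r = (1 / 3) * K r * (2 * deriv B r + 5 * B r / r) + B r * deriv K r)
    (hc2 : ∀ r : ℝ, 0 < r →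
      c₂ r = (1 / 3) * K r * (deriv B r + B r / r) + (1 / 3) * B r * deriv K r)
    (hc3 : ∀ r : ℝ, 0 < r →
      c₃ r = (1 / 3) * K r * (-2 * deriv B r + B r / r) - (1 / 3) * B r * deriv K r) :
    ((∀ r : ℝ, 0 < r → c₁ r = 0) ∧ (∀ r : ℝ, 0 < r → c₂ r = 0) ∧
        (∀ r : ℝ, 0 < r → c₃ r = 0)) ↔
      ((∃ bm1 b1 b2 : ℝ, ∀ r : ℝ, 0 < r → B r = bm1 / r + 1 + b1 * r + b2 * r ^ 2) ∨
        (∃ κ : ℝ, ∀ r : ℝ, 0 < r → B r = κ * r ^ 2)) := by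
  -- ## Common smoothness facts
  have hBd : ContDiffOn ℝ (⊤ : ℕ∞) (deriv B) (Set.Ioi 0) := hB.deriv_of_isOpen isOpen_Ioi (by simp)
  have hBdd : ContDiffOn ℝ (⊤ : ℕ∞) (deriv (deriv B)) (Set.Ioi 0) := hBd.deriv_of_isOpen isOpen_Ioi (by simp)
  have hB1 : ∀ r : ℝ, 0 < r → HasDerivAt B (deriv B r) r := fun r hr =>
    ((hB.contDiffAt (isOpen_Ioi.mem_nhds hr)).differentiableAt (by simp)).hasDerivAt
  have hB2 : ∀ r : ℝ, 0 < r → HasDerivAt (deriv B) (deriv (deriv B) r) r := fun r hr =>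
    ((hBd.contDiffAt (isOpen_Ioi.mem_nhds hr)).differentiableAt (by simp)).hasDerivAt
  have hAc : ContDiffOn ℝ (⊤ : ℕ∞) A (Set.Ioi 0) := by
    have : ContDiffOn ℝ (⊤ : ℕ∞) (fun r => (1 - B r) / r ^ 2 + deriv (deriv B) r / 2) (Set.Ioi 0) := by
      refine ContDiffOn.add (ContDiffOn.div (contDiffOn_const.sub hB)
        (contDiffOn_id.pow 2) (fun r hr => pow_ne_zero 2 (ne_of_gt hr))) (hBdd.div_const 2)
    exact this.congr fun r hr => hA r hr
  have hA1 : ∀ r : ℝ, 0 < r → HasDerivAt A (deriv A r) r := fun r hr =>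
    ((hAc.contDiffAt (isOpen_Ioi.mem_nhds hr)).differentiableAt (by simp)).hasDerivAt
  have hKc : ContinuousOn K (Set.Ioi 0) := by
    have : ContinuousOn (fun r => deriv A r + A r / r) (Set.Ioi 0) :=
      ((hAc.deriv_of_isOpen isOpen_Ioi (by simp) : ContDiffOn ℝ (⊤ : ℕ∞) (deriv A) _).continuousOn).add
        ((hAc.continuousOn).div continuousOn_id fun r hr => ne_of_gt hr)
    exact this.congr fun r hr => hK r hr
  constructor
  · rintro ⟨h1, h2, h3⟩
    -- E1 : K * (2B/r - B') = 0
    have hE1 : ∀ r : ℝ, 0 < r → K r * (2 * B r / r - deriv B r) = 0 := by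
      intro r hr
      have e : c₂ r + c₃ r = 0 := by rw [h2 r hr, h3 r hr]; ring
      rw [hc2 r hr, hc3 r hr] at e
      linear_combination 3 * e
    -- where K ≠ 0, second derivative is explicit
    have hBpp : ∀ r : ℝ, 0 < r → K r ≠ 0 → deriv (deriv B) r = 2 * B r / r ^ 2 := by
      intro r hr hKr
      have hev : ∀ᶠ x in nhds r, x ∈ Set.Ioi (0:ℝ) ∧ K x ≠ 0 :=
        (isOpen_Ioi.eventually_mem hr).and
          ((hKc.continuousAt (isOpen_Ioi.mem_nhds hr)).eventually_ne hKr)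
      have hev' : deriv B =ᶠ[nhds r] fun x => 2 * B x / x := by
        refine hev.mono fun x ⟨hx, hKx⟩ => ?_
        have := hE1 x hx
        rcases mul_eq_zero.1 this with h | h
        · exact absurd h hKx
        · linarith
      have hq : HasDerivAt (fun x => 2 * B x / x)
          ((2 * deriv B r * r - 2 * B r * 1) / r ^ 2) r :=
        ((hB1 r hr).const_mul 2).div (hasDerivAt_id' r) (ne_of_gt hr)
      have hBr : deriv B r = 2 * B r / r := hev'.self_of_nhds
      rw [hev'.deriv_eq, hq.deriv, hBr]
      field_simp
      ring
    -- where K ≠ 0, r³K = -1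
    have hKval : ∀ r : ℝ, 0 < r → K r ≠ 0 → r ^ 3 * K r = -1 := by
      intro r hr hKr
      have hev : ∀ᶠ x in nhds r, x ∈ Set.Ioi (0:ℝ) ∧ K x ≠ 0 :=
        (isOpen_Ioi.eventually_mem hr).and
          ((hKc.continuousAt (isOpen_Ioi.mem_nhds hr)).eventually_ne hKr)
      have hevA : A =ᶠ[nhds r] fun x => 1 / x ^ 2 := by
        refine hev.mono fun x ⟨hx, hKx⟩ => ?_
        rw [hA x hx, hBpp x hx hKx]
        have hx' : (0:ℝ) < x := hx
        field_simp
        ring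
      have hq : HasDerivAt (fun x : ℝ => 1 / x ^ 2) (-(2 * r) / (r ^ 2) ^ 2) r := by
        have := (hasDerivAt_pow 2 r).inv (pow_ne_zero 2 (ne_of_gt hr))
        rw [show (fun x : ℝ => 1 / x ^ 2) = fun x => (x ^ 2)⁻¹ by simp [one_div]]
        exact this.congr_deriv (by push_cast; ring)
      have hdA : deriv A r = -(2 * r) / (r ^ 2) ^ 2 := by rw [hevA.deriv_eq, hq.deriv]
      have hAr : A r = 1 / r ^ 2 := hevA.self_of_nhds
      rw [hK r hr, hdA, hAr]
      field_simp
      ring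
    by_cases hz : ∀ r : ℝ, 0 < r → K r = 0
    · -- harmonic case
      left
      obtain ⟨c, hc⟩ : ∃ c, ∀ r : ℝ, 0 < r → A r = c / r := by
        refine ⟨A 1, fun r hr => ?_⟩
        have hg : ∀ x ∈ Set.Ioi (0:ℝ), HasDerivAt (fun y => y * A y) 0 x := by
          intro x hx
          have hx' : (0:ℝ) < x := hx
          have hdax : deriv A x = -A x / x := by
            have hk := hK x hx'
            rw [hz x hx'] at hk
            have h5 : deriv A x = -(A x / x) := by linarith
            rw [h5]; ring
          have h := (hasDerivAt_id' x).mul (hA1 x hx')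
          rw [hdax] at h
          refine h.congr_deriv ?_
          field_simp
          ring
        have h : r * A r = 1 * A 1 := const_of_hasDerivAt_zero hg hr
        rw [eq_div_iff (ne_of_gt hr), mul_comm]
        simpa using h
      have hB'' : ∀ r : ℝ, 0 < r →
          deriv (deriv B) r = 2 * c / r - 2 / r ^ 2 + 2 * B r / r ^ 2 := by
        intro r hr
        have h := hA r hr
        rw [hc r hr] at h
        have hr0 : r ≠ 0 := ne_of_gt hr
        field_simp at h ⊢
        linear_combination -h
      obtain ⟨β, hβ⟩ : ∃ β, ∀ r : ℝ, 0 < r →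
          deriv B r + c + (B r - 1 + c * r) / r = β * r := by
        refine ⟨(deriv B 1 + c + (B 1 - 1 + c * 1) / 1) / 1, fun r hr => ?_⟩
        have hw : ∀ x ∈ Set.Ioi (0:ℝ), HasDerivAt
            (fun y => (deriv B y + c + (B y - 1 + c * y) / y) / y) 0 x := by
          intro x hx
          have hx' : (0:ℝ) < x := hx
          have h1 : HasDerivAt (fun y => B y - 1 + c * y) (deriv B x + c * 1) x :=
            ((hB1 x hx').sub_const 1).add ((hasDerivAt_id' x).const_mul c)
          have h2 : HasDerivAt (fun y => deriv B y + c + (B y - 1 + c * y) / y)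
              (deriv (deriv B) x +
                ((deriv B x + c * 1) * x - (B x - 1 + c * x) * 1) / x ^ 2) x :=
            ((hB2 x hx').add_const c).add (h1.div (hasDerivAt_id' x) (ne_of_gt hx'))
          have h3 := h2.div (hasDerivAt_id' x) (ne_of_gt hx')
          refine h3.congr_deriv ?_
          rw [hB'' x hx']
          field_simp
          ring
        have h : (deriv B r + c + (B r - 1 + c * r) / r) / r
            = (deriv B 1 + c + (B 1 - 1 + c * 1) / 1) / 1 :=
          const_of_hasDerivAt_zero hw hr
        rw [div_eq_iff (ne_of_gt hr)] at h
        exact h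
      obtain ⟨γ, hγ⟩ : ∃ γ, ∀ r : ℝ, 0 < r →
          r * (B r - 1 + c * r) - β / 3 * r ^ 3 = γ := by
        refine ⟨1 * (B 1 - 1 + c * 1) - β / 3 * 1 ^ 3, fun r hr => ?_⟩
        have hh : ∀ x ∈ Set.Ioi (0:ℝ), HasDerivAt
            (fun y => y * (B y - 1 + c * y) - β / 3 * y ^ 3) 0 x := by
          intro x hx
          have hx' : (0:ℝ) < x := hx
          have h1 : HasDerivAt (fun y => B y - 1 + c * y) (deriv B x + c * 1) x :=
            ((hB1 x hx').sub_const 1).add ((hasDerivAt_id' x).const_mul c)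
          have h2 := ((hasDerivAt_id' x).mul h1).sub
            ((hasDerivAt_pow 3 x).const_mul (β / 3))
          refine h2.congr_deriv ?_
          have hdBx : deriv B x = β * x - c - (B x - 1 + c * x) / x := by
            linarith [hβ x hx']
          rw [hdBx]
          push_cast
          field_simp
          ring
        exact const_of_hasDerivAt_zero hh hr
      refine ⟨γ, -c, β / 3, fun r hr => ?_⟩
      have h := hγ r hr
      have hr0 : r ≠ 0 := ne_of_gt hr
      field_simp
      first
      | linear_combination h
      | linear_combination 2 * h
      | linear_combination 3 * h
      | linear_combination (1/2) * h
    · -- bi-harmonic case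
      right
      push_neg at hz
      obtain ⟨r0, hr0, hK0⟩ := hz
      have hall : ∀ r : ℝ, 0 < r → K r ≠ 0 := by
        by_contra hcon
        push_neg at hcon
        obtain ⟨r1, hr1, hK1⟩ := hcon
        have hFc : ContinuousOn (fun r => r ^ 3 * K r) (Set.Ioi 0) :=
          ((continuous_pow 3).continuousOn).mul hKc
        have hpre : IsPreconnected ((fun r => r ^ 3 * K r) '' Set.Ioi 0) :=
          (isPreconnected_Ioi).image _ hFc
        have h0 : (0:ℝ) ∈ (fun r => r ^ 3 * K r) '' Set.Ioi 0 :=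
          ⟨r1, hr1, by simp [hK1]⟩
        have hm1 : (-1:ℝ) ∈ (fun r => r ^ 3 * K r) '' Set.Ioi 0 :=
          ⟨r0, hr0, hKval r0 hr0 hK0⟩
        have hsub := hpre.ordConnected.out hm1 h0
        obtain ⟨r2, hr2, hF2⟩ := hsub (show (-1/2 : ℝ) ∈ Set.Icc (-1:ℝ) 0 by norm_num)
        have hF2' : r2 ^ 3 * K r2 = -1 / 2 := hF2
        by_cases h : K r2 = 0
        · rw [h] at hF2'
          norm_num at hF2'
        · linarith [hKval r2 hr2 h]
      have hBd' : ∀ r : ℝ, 0 < r → deriv B r = 2 * B r / r := by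
        intro r hr
        rcases mul_eq_zero.1 (hE1 r hr) with h | h
        · exact absurd h (hall r hr)
        · linarith
      have hg : ∀ x ∈ Set.Ioi (0:ℝ), HasDerivAt (fun y => B y / y ^ 2) 0 x := by
        intro x hx
        have hx' : (0:ℝ) < x := hx
        have h := (hB1 x hx').div (hasDerivAt_pow 2 x) (pow_ne_zero 2 (ne_of_gt hx'))
        refine h.congr_deriv ?_
        rw [hBd' x hx']
        push_cast
        field_simp
        ring
      refine ⟨B 1 / 1 ^ 2, fun r hr => ?_⟩
      have h : B r / r ^ 2 = B 1 / 1 ^ 2 := const_of_hasDerivAt_zero hg hr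
      rw [div_eq_iff (pow_ne_zero 2 (ne_of_gt hr))] at h
      exact h
  · rintro (⟨bm1, b1, b2, hBf⟩ | ⟨κ, hBf⟩)
    · -- harmonic family
      have hdB : ∀ r : ℝ, 0 < r → deriv B r = -bm1 / r ^ 2 + b1 + 2 * b2 * r := by
        intro r hr
        have hev : B =ᶠ[nhds r] fun x => bm1 / x + 1 + b1 * x + b2 * x ^ 2 :=
          (isOpen_Ioi.eventually_mem hr).mono fun x hx => hBf x hx
        have hfd : HasDerivAt (fun x : ℝ => bm1 / x + 1 + b1 * x + b2 * x ^ 2)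
            (-bm1 / r ^ 2 + b1 + 2 * b2 * r) r := by
          have h := ((((hasDerivAt_const r bm1).div (hasDerivAt_id' r)
            (ne_of_gt hr)).add_const 1).add ((hasDerivAt_id' r).const_mul b1)).add
            ((hasDerivAt_pow 2 r).const_mul b2)
          refine h.congr_deriv ?_
          push_cast
          field_simp
          ring
        rw [hev.deriv_eq, hfd.deriv]
      have hddB : ∀ r : ℝ, 0 < r → deriv (deriv B) r = 2 * bm1 / r ^ 3 + 2 * b2 := by
        intro r hr
        have hev : deriv B =ᶠ[nhds r] fun x => -bm1 / x ^ 2 + b1 + 2 * b2 * x :=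
          (isOpen_Ioi.eventually_mem hr).mono fun x hx => hdB x hx
        have hfd : HasDerivAt (fun x : ℝ => -bm1 / x ^ 2 + b1 + 2 * b2 * x)
            (2 * bm1 / r ^ 3 + 2 * b2) r := by
          have h := (((hasDerivAt_const r (-bm1)).div (hasDerivAt_pow 2 r)
            (pow_ne_zero 2 (ne_of_gt hr))).add_const b1).add
            ((hasDerivAt_id' r).const_mul (2 * b2))
          refine h.congr_deriv ?_
          push_cast
          field_simp
          ring
        rw [hev.deriv_eq, hfd.deriv]
      have hAval : ∀ r : ℝ, 0 < r → A r = -b1 / r := by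
        intro r hr
        rw [hA r hr, hBf r hr, hddB r hr]
        field_simp
        ring
      have hKz : ∀ r : ℝ, 0 < r → K r = 0 := by
        intro r hr
        have hev : A =ᶠ[nhds r] fun x => -b1 / x :=
          (isOpen_Ioi.eventually_mem hr).mono fun x hx => hAval x hx
        have hfd : HasDerivAt (fun x : ℝ => -b1 / x) (b1 / r ^ 2) r := by
          have h := (hasDerivAt_const r (-b1)).div (hasDerivAt_id' r) (ne_of_gt hr)
          refine h.congr_deriv ?_
          field_simp
          ring
        have hdA : deriv A r = b1 / r ^ 2 := by rw [hev.deriv_eq, hfd.deriv]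
        rw [hK r hr, hdA, hAval r hr]
        field_simp
        ring
      have hdKz : ∀ r : ℝ, 0 < r → deriv K r = 0 := by
        intro r hr
        have hev : K =ᶠ[nhds r] fun _ => 0 :=
          (isOpen_Ioi.eventually_mem hr).mono fun x hx => hKz x hx
        rw [hev.deriv_eq, deriv_const]
      refine ⟨fun r hr => ?_, fun r hr => ?_, fun r hr => ?_⟩
      · rw [hc1 r hr, hKz r hr, hdKz r hr]; ring
      · rw [hc2 r hr, hKz r hr, hdKz r hr]; ring
      · rw [hc3 r hr, hKz r hr, hdKz r hr]; ring
    · -- bi-harmonic family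
      have hdB : ∀ r : ℝ, 0 < r → deriv B r = 2 * κ * r := by
        intro r hr
        have hev : B =ᶠ[nhds r] fun x => κ * x ^ 2 :=
          (isOpen_Ioi.eventually_mem hr).mono fun x hx => hBf x hx
        have hfd : HasDerivAt (fun x : ℝ => κ * x ^ 2) (2 * κ * r) r := by
          have h := (hasDerivAt_pow 2 r).const_mul κ
          refine h.congr_deriv ?_
          push_cast
          ring
        rw [hev.deriv_eq, hfd.deriv]
      have hddB : ∀ r : ℝ, 0 < r → deriv (deriv B) r = 2 * κ := by
        intro r hr
        have hev : deriv B =ᶠ[nhds r] fun x => 2 * κ * x :=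
          (isOpen_Ioi.eventually_mem hr).mono fun x hx => hdB x hx
        have hfd : HasDerivAt (fun x : ℝ => 2 * κ * x) (2 * κ) r := by
          exact ((hasDerivAt_id' r).const_mul (2 * κ)).congr_deriv (by ring)
        rw [hev.deriv_eq, hfd.deriv]
      have hAval : ∀ r : ℝ, 0 < r → A r = 1 / r ^ 2 := by
        intro r hr
        rw [hA r hr, hBf r hr, hddB r hr]
        field_simp
        ring
      have hKv : ∀ r : ℝ, 0 < r → K r = -(1 / r ^ 3) := by
        intro r hr
        have hev : A =ᶠ[nhds r] fun x => 1 / x ^ 2 :=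
          (isOpen_Ioi.eventually_mem hr).mono fun x hx => hAval x hx
        have hfd : HasDerivAt (fun x : ℝ => 1 / x ^ 2) (-(2 * r) / (r ^ 2) ^ 2) r := by
          have h := (hasDerivAt_const r (1:ℝ)).div (hasDerivAt_pow 2 r)
            (pow_ne_zero 2 (ne_of_gt hr))
          refine h.congr_deriv ?_
          push_cast
          field_simp
          ring
        have hdA : deriv A r = -(2 * r) / (r ^ 2) ^ 2 := by rw [hev.deriv_eq, hfd.deriv]
        rw [hK r hr, hdA, hAval r hr]
        field_simp
        ring
      have hdKv : ∀ r : ℝ, 0 < r → deriv K r = 3 / r ^ 4 := by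
        intro r hr
        have hev : K =ᶠ[nhds r] fun x => -(1 / x ^ 3) :=
          (isOpen_Ioi.eventually_mem hr).mono fun x hx => hKv x hx
        have hfd : HasDerivAt (fun x : ℝ => -(1 / x ^ 3)) (3 / r ^ 4) r := by
          have h := ((hasDerivAt_const r (1:ℝ)).div (hasDerivAt_pow 3 r)
            (pow_ne_zero 3 (ne_of_gt hr))).neg
          refine h.congr_deriv ?_
          push_cast
          field_simp
          ring
        rw [hev.deriv_eq, hfd.deriv]
      refine ⟨fun r hr => ?_, fun r hr => ?_, fun r hr => ?_⟩
      · rw [hc1 r hr, hKv r hr, hdKv r hr, hdB r hr, hBf r hr]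
        field_simp
        ring
      · rw [hc2 r hr, hKv r hr, hdKv r hr, hdB r hr, hBf r hr]
        field_simp
        ring
      · rw [hc3 r hr, hKv r hr, hdKv r hr, hdB r hr, hBf r hr]
        field_simp
        ring
end

section
/- Let B : (0,∞) → ℝ be smooth and define A(r) = (1−B(r))/r² + B''(r)/2. Then A(r) = 0 for all r > 0 if and only if there exist constants b₋₁, b₂ ∈ ℝ such that B(r) = b₋₁/r + 1 + b₂r² for all r > 0. -/
open Set

/-- constancy from zero derivative on `Ioi 0`. -/
lemma const_of_hasDerivAt_zero_Ioi {f : ℝ → ℝ}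
    (h : ∀ x ∈ Ioi (0:ℝ), HasDerivAt f 0 x) :
    ∀ x ∈ Ioi (0:ℝ), ∀ y ∈ Ioi (0:ℝ), f x = f y := by
  intro x hx y hy
  refine (convex_Ioi (0:ℝ)).is_const_of_fderivWithin_eq_zero
    (fun z hz => ((h z hz).differentiableAt).differentiableWithinAt) ?_ hx hy
  intro z hz
  rw [fderivWithin_of_isOpen isOpen_Ioi hz, (h z hz).hasFDerivAt.fderiv]
  ext; simp

/-- The anisotropy coefficient `A(r) = (1−B)/r² + B''/2` vanishes on
`(0,∞)` iff `B(r) = b₋₁/r + 1 + b₂r²` (Einstein / Schwarzschild–de Sitter). -/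
theorem einstein_iff
    (B : ℝ → ℝ) (hB : ContDiffOn ℝ (⊤ : ℕ∞) B (Set.Ioi 0)) :
    (∀ r : ℝ, 0 < r → (1 - B r) / r ^ 2 + deriv (deriv B) r / 2 = 0) ↔
      (∃ bm1 b2 : ℝ, ∀ r : ℝ, 0 < r → B r = bm1 / r + 1 + b2 * r ^ 2) := by
  have hB' : ContDiffOn ℝ ((⊤ : ℕ∞) : WithTop ℕ∞) B (Set.Ioi 0) := hB.of_le (by simp)
  obtain ⟨hBd, hB1⟩ := (contDiffOn_infty_iff_deriv_of_isOpen isOpen_Ioi).1 hB'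
  obtain ⟨hB1d, _⟩ := (contDiffOn_infty_iff_deriv_of_isOpen isOpen_Ioi).1 hB1
  have hd1 : ∀ x ∈ Ioi (0:ℝ), HasDerivAt B (deriv B x) x := fun x hx =>
    (hBd.differentiableAt (isOpen_Ioi.mem_nhds hx)).hasDerivAt
  have hd2 : ∀ x ∈ Ioi (0:ℝ), HasDerivAt (deriv B) (deriv (deriv B) x) x := fun x hx =>
    (hB1d.differentiableAt (isOpen_Ioi.mem_nhds hx)).hasDerivAt
  constructor
  · intro hA
    -- second derivative equation
    have key : ∀ r ∈ Ioi (0:ℝ), r ^ 2 * deriv (deriv B) r - 2 * (B r - 1) = 0 := by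
      intro r hr
      have hr0 : (r:ℝ) ≠ 0 := ne_of_gt hr
      have := hA r hr
      field_simp at this
      nlinarith [this]
    -- first integral: w r = r^2 * B' r - 2*r*(B r - 1) is constant
    set w : ℝ → ℝ := fun r => r ^ 2 * deriv B r - 2 * r * (B r - 1) with hw
    have hwd : ∀ x ∈ Ioi (0:ℝ), HasDerivAt w 0 x := by
      intro x hx
      have h1 : HasDerivAt (fun r : ℝ => r ^ 2 * deriv B r)
          (2 * x * deriv B x + x ^ 2 * deriv (deriv B) x) x := by
        have := ((hasDerivAt_pow 2 x).mul (hd2 x hx))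
        exact this.congr_deriv (by norm_num)
      have h2 : HasDerivAt (fun r : ℝ => 2 * r * (B r - 1))
          (2 * (B x - 1) + 2 * x * deriv B x) x := by
        have := (((hasDerivAt_id x).const_mul 2).mul ((hd1 x hx).sub_const 1))
        exact this.congr_deriv (by simp)
      have h3 := h1.sub h2
      have heq : 2 * x * deriv B x + x ^ 2 * deriv (deriv B) x -
          (2 * (B x - 1) + 2 * x * deriv B x) = 0 := by
        have := key x hx; ring_nf; ring_nf at this; linarith
      rw [heq] at h3
      exact h3
    obtain ⟨c, hc⟩ : ∃ c, ∀ x ∈ Ioi (0:ℝ), w x = c := by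
      refine ⟨w 1, fun x hx => const_of_hasDerivAt_zero_Ioi hwd x hx 1 (by norm_num)⟩
    -- second integral: z r = (B r - 1)/r^2 + c/(3 r^3) is constant
    set z : ℝ → ℝ := fun r => (B r - 1) / r ^ 2 + c / 3 / r ^ 3 with hz
    have hzd : ∀ x ∈ Ioi (0:ℝ), HasDerivAt z 0 x := by
      intro x hx
      have hx0 : (x:ℝ) ≠ 0 := ne_of_gt hx
      have h1 : HasDerivAt (fun r : ℝ => (B r - 1) / r ^ 2)
          ((deriv B x * x ^ 2 - (B x - 1) * (2 * x)) / (x ^ 2) ^ 2) x := by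
        exact ((hd1 x hx).sub_const 1).div (by simpa [pow_one] using hasDerivAt_pow 2 x)
          (pow_ne_zero 2 hx0)
      have h2 : HasDerivAt (fun r : ℝ => c / 3 / r ^ 3)
          ((0 * x ^ 3 - c / 3 * (3 * x ^ 2)) / (x ^ 3) ^ 2) x := by
        exact (hasDerivAt_const x (c/3)).div (by simpa using hasDerivAt_pow 3 x)
          (pow_ne_zero 3 hx0)
      have h3 := h1.add h2
      have heq : (deriv B x * x ^ 2 - (B x - 1) * (2 * x)) / (x ^ 2) ^ 2 +
          (0 * x ^ 3 - c / 3 * (3 * x ^ 2)) / (x ^ 3) ^ 2 = 0 := by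
        have hcx := hc x hx
        simp only [hw] at hcx
        field_simp
        nlinarith [hcx]
      rw [heq] at h3
      exact h3
    obtain ⟨a, ha⟩ : ∃ a, ∀ x ∈ Ioi (0:ℝ), z x = a := by
      refine ⟨z 1, fun x hx => const_of_hasDerivAt_zero_Ioi hzd x hx 1 (by norm_num)⟩
    refine ⟨-(c / 3), a, fun r hr => ?_⟩
    have hr0 : (r:ℝ) ≠ 0 := ne_of_gt hr
    have h := ha r hr
    simp only [hz] at h
    have expand : B r = ((B r - 1) / r ^ 2 + c / 3 / r ^ 3) * r ^ 2 + 1 - c / 3 / r := by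
      field_simp
      ring
    rw [expand, h]
    ring
  · rintro ⟨bm1, b2, hBeq⟩ r hr
    have hr0 : (r:ℝ) ≠ 0 := ne_of_gt hr
    set f : ℝ → ℝ := fun x => bm1 / x + 1 + b2 * x ^ 2 with hf
    set g : ℝ → ℝ := fun x => -bm1 / x ^ 2 + 2 * b2 * x with hg
    have hfd : ∀ x ∈ Ioi (0:ℝ), HasDerivAt f (g x) x := by
      intro x hx
      have hx0 : (x:ℝ) ≠ 0 := ne_of_gt hx
      have h1 : HasDerivAt (fun y : ℝ => bm1 / y) (-bm1 / x ^ 2) x := by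
        have := (hasDerivAt_const x bm1).div (hasDerivAt_id x) hx0
        exact this.congr_deriv (by simp)
      have h2 : HasDerivAt (fun y : ℝ => b2 * y ^ 2) (b2 * (2 * x)) x := by
        simpa using (hasDerivAt_pow 2 x).const_mul b2
      have h3 := (h1.add_const 1).add h2
      have heq : g x = -bm1 / x ^ 2 + b2 * (2 * x) := by simp only [hg]; ring
      rw [heq]
      exact h3
    have hgd : ∀ x ∈ Ioi (0:ℝ), HasDerivAt g (2 * bm1 / x ^ 3 + 2 * b2) x := by
      intro x hx
      have hx0 : (x:ℝ) ≠ 0 := ne_of_gt hx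
      have h1 : HasDerivAt (fun y : ℝ => -bm1 / y ^ 2)
          ((0 * x ^ 2 - -bm1 * (2 * x)) / (x ^ 2) ^ 2) x := by
        exact (hasDerivAt_const x (-bm1)).div (by simpa [pow_one] using hasDerivAt_pow 2 x)
          (pow_ne_zero 2 hx0)
      have h2 : HasDerivAt (fun y : ℝ => 2 * b2 * y) (2 * b2) x := by
        simpa using (hasDerivAt_id x).const_mul (2 * b2)
      have h3 := h1.add h2
      have heq : (0 * x ^ 2 - -bm1 * (2 * x)) / (x ^ 2) ^ 2 + 2 * b2
          = 2 * bm1 / x ^ 3 + 2 * b2 := by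
        field_simp; ring
      rw [heq] at h3
      exact h3
    have hBf : B =ᶠ[nhds r] f :=
      Filter.eventuallyEq_of_mem (isOpen_Ioi.mem_nhds hr) (fun x hx => hBeq x hx)
    have hfg : deriv f =ᶠ[nhds r] g := by
      refine Filter.eventuallyEq_of_mem (isOpen_Ioi.mem_nhds hr) (fun x hx => ?_)
      exact (hfd x hx).deriv
    have h2 : deriv (deriv B) r = deriv g r := by
      calc deriv (deriv B) r = deriv (deriv f) r := (hBf.deriv).deriv_eq
        _ = deriv g r := hfg.deriv_eq
    rw [h2, (hgd r hr).deriv, hBeq r hr]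
    field_simp
    ring
end

section
/- Let B : (0,∞) → ℝ be smooth with B(r) > 0 for all r > 0. Define A(r) = (1−B(r))/r² + B''(r)/2, E(r) = (1/2)[(1−B(r))/r² + B'(r)/r − B''(r)/2], K(r) = A'(r) + A(r)/r, and the Bach coefficients S(r) = −(2B(r)/r)K(r) − (2B(r)/3)K'(r) and D(r) = −(8/3)A(r)E(r) − (4/3)K(r)(B'(r)+B(r)/r) − (4B(r)/3)K'(r). Then S(r) = 0 and D(r) = 0 for all r > 0 if and only if there exist constants b₋₁, b₀, b₁, b₂ ∈ ℝ satisfying 1 − b₀² = −3b₁b₋₁ such that B(r) = b₋₁/r + b₀ + b₁r + b₂r² for all r > 0. -/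
open Set Filter

private lemma hdc1 (a : ℝ) {r : ℝ} (hr : r ≠ 0) :
    HasDerivAt (fun x : ℝ => a / x) (-a / r ^ 2) r := by
  have h := (hasDerivAt_const r a).div (hasDerivAt_id r) hr
  refine h.congr_deriv ?_
  simp only [id]
  field_simp
  ring

private lemma hdc2 (a : ℝ) {r : ℝ} (hr : r ≠ 0) :
    HasDerivAt (fun x : ℝ => a / x ^ 2) (-2 * a / r ^ 3) r := by
  have h := (hasDerivAt_const r a).div (hasDerivAt_pow 2 r) (pow_ne_zero 2 hr)
  refine h.congr_deriv ?_
  field_simp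
  ring

private lemma hdc3 (a : ℝ) {r : ℝ} (hr : r ≠ 0) :
    HasDerivAt (fun x : ℝ => a / x ^ 3) (-3 * a / r ^ 4) r := by
  have h := (hasDerivAt_const r a).div (hasDerivAt_pow 3 r) (pow_ne_zero 3 hr)
  refine h.congr_deriv ?_
  field_simp
  ring

private lemma const_on_Ioi {f : ℝ → ℝ} (h : ∀ x ∈ Set.Ioi (0:ℝ), HasDerivAt f 0 x) :
    ∀ x ∈ Set.Ioi (0:ℝ), f x = f 1 := by
  intro x hx
  apply (convex_Ioi (0:ℝ)).is_const_of_fderivWithin_eq_zero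
    (fun y hy => (h y hy).differentiableAt.differentiableWithinAt)
    (fun y hy => ?_) hx (by norm_num)
  rw [fderivWithin_of_isOpen isOpen_Ioi hy, (h y hy).hasFDerivAt.fderiv]
  ext t
  simp

/-- Values of everything for a polynomial-type `B`. -/
private lemma SD_vals (B A E K S D : ℝ → ℝ) (bm1 b0 b1 b2 : ℝ)
    (hA : ∀ r : ℝ, 0 < r → A r = (1 - B r) / r ^ 2 + deriv (deriv B) r / 2)
    (hE : ∀ r : ℝ, 0 < r →
      E r = (1 / 2) * ((1 - B r) / r ^ 2 + deriv B r / r - deriv (deriv B) r / 2))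
    (hK : ∀ r : ℝ, 0 < r → K r = deriv A r + A r / r)
    (hS : ∀ r : ℝ, 0 < r →
      S r = -(2 * B r / r) * K r - (2 * B r / 3) * deriv K r)
    (hD : ∀ r : ℝ, 0 < r →
      D r = -(8 / 3) * A r * E r - (4 / 3) * K r * (deriv B r + B r / r)
        - (4 * B r / 3) * deriv K r)
    (hpoly : ∀ r : ℝ, 0 < r → B r = bm1 / r + b0 + b1 * r + b2 * r ^ 2) :
    ∀ r : ℝ, 0 < r → S r = 0 ∧
      D r = (-(4 / 3) * (1 - b0 ^ 2) - 4 * b1 * bm1) / r ^ 4 := by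
  have h1 : ∀ r : ℝ, 0 < r → deriv B r = -bm1 / r ^ 2 + b1 + 2 * b2 * r := by
    intro r hr
    have hev : B =ᶠ[nhds r] (fun x => bm1 / x + b0 + b1 * x + b2 * x ^ 2) :=
      eventually_of_mem (isOpen_Ioi.mem_nhds hr) (fun x hx => hpoly x hx)
    have hd : HasDerivAt (fun x : ℝ => bm1 / x + b0 + b1 * x + b2 * x ^ 2)
        (-bm1 / r ^ 2 + b1 + 2 * b2 * r) r := by
      have := (((hdc1 bm1 hr.ne').add (hasDerivAt_const r b0)).add
        ((hasDerivAt_id r).const_mul b1)).add ((hasDerivAt_pow 2 r).const_mul b2)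
      refine this.congr_deriv ?_
      push_cast
      ring
    rw [hev.deriv_eq]
    exact hd.deriv
  have h2 : ∀ r : ℝ, 0 < r → deriv (deriv B) r = 2 * bm1 / r ^ 3 + 2 * b2 := by
    intro r hr
    have hev : deriv B =ᶠ[nhds r] (fun x => -bm1 / x ^ 2 + b1 + 2 * b2 * x) :=
      eventually_of_mem (isOpen_Ioi.mem_nhds hr) (fun x hx => h1 x hx)
    have hd : HasDerivAt (fun x : ℝ => -bm1 / x ^ 2 + b1 + 2 * b2 * x)
        (2 * bm1 / r ^ 3 + 2 * b2) r := by
      have := ((hdc2 (-bm1) hr.ne').add (hasDerivAt_const r b1)).add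
        ((hasDerivAt_id r).const_mul (2 * b2))
      refine this.congr_deriv ?_
      ring
    rw [hev.deriv_eq]
    exact hd.deriv
  have h3 : ∀ r : ℝ, 0 < r → A r = (1 - b0) / r ^ 2 - b1 / r := by
    intro r hr
    rw [hA r hr, hpoly r hr, h2 r hr]
    field_simp
    ring
  have h4 : ∀ r : ℝ, 0 < r → deriv A r = -2 * (1 - b0) / r ^ 3 + b1 / r ^ 2 := by
    intro r hr
    have hev : A =ᶠ[nhds r] (fun x => (1 - b0) / x ^ 2 - b1 / x) :=
      eventually_of_mem (isOpen_Ioi.mem_nhds hr) (fun x hx => h3 x hx)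
    have hd : HasDerivAt (fun x : ℝ => (1 - b0) / x ^ 2 - b1 / x)
        (-2 * (1 - b0) / r ^ 3 + b1 / r ^ 2) r := by
      have := (hdc2 (1 - b0) hr.ne').sub (hdc1 b1 hr.ne')
      refine this.congr_deriv ?_
      ring
    rw [hev.deriv_eq]
    exact hd.deriv
  have h5 : ∀ r : ℝ, 0 < r → K r = (b0 - 1) / r ^ 3 := by
    intro r hr
    rw [hK r hr, h4 r hr, h3 r hr]
    field_simp
    ring
  have h6 : ∀ r : ℝ, 0 < r → deriv K r = 3 * (1 - b0) / r ^ 4 := by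
    intro r hr
    have hev : K =ᶠ[nhds r] (fun x => (b0 - 1) / x ^ 3) :=
      eventually_of_mem (isOpen_Ioi.mem_nhds hr) (fun x hx => h5 x hx)
    have hd : HasDerivAt (fun x : ℝ => (b0 - 1) / x ^ 3) (3 * (1 - b0) / r ^ 4) r := by
      have := hdc3 (b0 - 1) hr.ne'
      convert this using 1
      ring
    rw [hev.deriv_eq]
    exact hd.deriv
  intro r hr
  constructor
  · rw [hS r hr, h5 r hr, h6 r hr]
    field_simp
    ring
  · rw [hD r hr, hE r hr, h5 r hr, h6 r hr, h3 r hr, h2 r hr, h1 r hr, hpoly r hr]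
    field_simp
    ring


/-- The Bach coefficients `S = B₁+B₂` and `D = B₁−B₂` of the static
spherically symmetric metric with function `B > 0` vanish identically on `(0,∞)` iff
`B(r) = b₋₁/r + b₀ + b₁r + b₂r²` with the Mannheim–Kazanas constraint
`1 − b₀² = −3b₁b₋₁`. -/
theorem bach_flat_iff
    (B A E K S D : ℝ → ℝ)
    (hB : ContDiffOn ℝ (⊤ : ℕ∞) B (Set.Ioi 0))
    (hBpos : ∀ r : ℝ, 0 < r → 0 < B r)
    (hA : ∀ r : ℝ, 0 < r → A r = (1 - B r) / r ^ 2 + deriv (deriv B) r / 2)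
    (hE : ∀ r : ℝ, 0 < r →
      E r = (1 / 2) * ((1 - B r) / r ^ 2 + deriv B r / r - deriv (deriv B) r / 2))
    (hK : ∀ r : ℝ, 0 < r → K r = deriv A r + A r / r)
    (hS : ∀ r : ℝ, 0 < r →
      S r = -(2 * B r / r) * K r - (2 * B r / 3) * deriv K r)
    (hD : ∀ r : ℝ, 0 < r →
      D r = -(8 / 3) * A r * E r - (4 / 3) * K r * (deriv B r + B r / r)
        - (4 * B r / 3) * deriv K r) :
    ((∀ r : ℝ, 0 < r → S r = 0) ∧ (∀ r : ℝ, 0 < r → D r = 0)) ↔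
      (∃ bm1 b0 b1 b2 : ℝ, 1 - b0 ^ 2 = -(3 * b1 * bm1) ∧
        ∀ r : ℝ, 0 < r → B r = bm1 / r + b0 + b1 * r + b2 * r ^ 2) := by
  constructor
  · rintro ⟨hS0, hD0⟩
    -- regularity
    have hne : ∀ x ∈ Set.Ioi (0:ℝ), x ≠ 0 := fun x hx => ne_of_gt hx
    have hB1 : ContDiffOn ℝ (⊤ : ℕ∞) (deriv B) (Set.Ioi 0) := hB.deriv_of_isOpen isOpen_Ioi (by simp)
    have hB2 : ContDiffOn ℝ (⊤ : ℕ∞) (deriv (deriv B)) (Set.Ioi 0) :=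
      hB1.deriv_of_isOpen isOpen_Ioi (by simp)
    set fA : ℝ → ℝ := fun x => (1 - B x) / x ^ 2 + deriv (deriv B) x / 2 with hfAdef
    have hfA : ContDiffOn ℝ (⊤ : ℕ∞) fA (Set.Ioi 0) := by
      apply ContDiffOn.add
      · exact (contDiffOn_const.sub hB).div (contDiffOn_id.pow 2)
          (fun x hx => pow_ne_zero 2 (hne x hx))
      · exact hB2.div_const 2
    have hAe : ∀ x ∈ Set.Ioi (0:ℝ), A x = fA x := fun x hx => hA x hx
    have hdA : ∀ x ∈ Set.Ioi (0:ℝ), DifferentiableAt ℝ A x := by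
      intro x hx
      have hfd : DifferentiableAt ℝ fA x :=
        (hfA.contDiffAt (isOpen_Ioi.mem_nhds hx)).differentiableAt (by simp)
      exact hfd.congr_of_eventuallyEq
        (eventually_of_mem (isOpen_Ioi.mem_nhds hx) (fun y hy => hAe y hy))
    have hdAe : ∀ x ∈ Set.Ioi (0:ℝ), deriv A x = deriv fA x := by
      intro x hx
      exact Filter.EventuallyEq.deriv_eq
        (eventually_of_mem (isOpen_Ioi.mem_nhds hx) (fun y hy => hAe y hy))
    set fK : ℝ → ℝ := fun x => deriv fA x + fA x / x with hfKdef
    have hfK : ContDiffOn ℝ (⊤ : ℕ∞) fK (Set.Ioi 0) :=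
      (hfA.deriv_of_isOpen isOpen_Ioi (by simp)).add (hfA.div contDiffOn_id hne)
    have hKe : ∀ x ∈ Set.Ioi (0:ℝ), K x = fK x := by
      intro x hx
      rw [hK x hx, hdAe x hx, hAe x hx]
    have hdK : ∀ x ∈ Set.Ioi (0:ℝ), DifferentiableAt ℝ K x := by
      intro x hx
      have hfd : DifferentiableAt ℝ fK x :=
        (hfK.contDiffAt (isOpen_Ioi.mem_nhds hx)).differentiableAt (by simp)
      exact hfd.congr_of_eventuallyEq
        (eventually_of_mem (isOpen_Ioi.mem_nhds hx) (fun y hy => hKe y hy))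
    have hdB : ∀ x ∈ Set.Ioi (0:ℝ), DifferentiableAt ℝ B x := fun x hx =>
      (hB.contDiffAt (isOpen_Ioi.mem_nhds hx)).differentiableAt (by simp)
    have hdB1 : ∀ x ∈ Set.Ioi (0:ℝ), DifferentiableAt ℝ (deriv B) x := fun x hx =>
      (hB1.contDiffAt (isOpen_Ioi.mem_nhds hx)).differentiableAt (by simp)
    -- Step 1 : K r = c / r^3
    have hKode : ∀ x ∈ Set.Ioi (0:ℝ), deriv K x = -3 * K x / x := by
      intro x hx
      have hx0 : x ≠ 0 := ne_of_gt hx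
      have hBne : B x ≠ 0 := ne_of_gt (hBpos x hx)
      have key : B x * (x * deriv K x + 3 * K x) = -(3 * x / 2) * S x := by
        rw [hS x hx]; field_simp; ring
      rw [hS0 x hx, mul_zero] at key
      have h2 := (mul_eq_zero.mp key).resolve_left hBne
      field_simp
      linarith
    have hG1 : ∀ x ∈ Set.Ioi (0:ℝ), HasDerivAt (fun x => x ^ 3 * K x) 0 x := by
      intro x hx
      have hx0 : x ≠ 0 := ne_of_gt hx
      have h2 := (hasDerivAt_pow 3 x).mul (hdK x hx).hasDerivAt
      refine h2.congr_deriv ?_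
      rw [hKode x hx]
      push_cast
      field_simp
      ring
    obtain ⟨c, hcdef⟩ : ∃ c : ℝ, c = K 1 := ⟨_, rfl⟩
    have hKc : ∀ x ∈ Set.Ioi (0:ℝ), K x = c / x ^ 3 := by
      intro x hx
      have hx0 : x ≠ 0 := ne_of_gt hx
      have := const_on_Ioi hG1 x hx
      simp only [one_pow, one_mul] at this
      field_simp
      rw [hcdef]
      linarith
    -- Step 2 : A r = d / r - c / r^2
    obtain ⟨d, hddef⟩ : ∃ d : ℝ, d = A 1 + c := ⟨_, rfl⟩
    have hG2 : ∀ x ∈ Set.Ioi (0:ℝ), HasDerivAt (fun x => x * A x + c / x) 0 x := by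
      intro x hx
      have hx0 : x ≠ 0 := ne_of_gt hx
      have h2 := ((hasDerivAt_id x).mul (hdA x hx).hasDerivAt).add (hdc1 c hx0)
      refine h2.congr_deriv ?_
      simp only [id]
      have e1 : x * K x = c / x ^ 2 := by
        rw [hKc x hx]; field_simp
      rw [hK x hx] at e1
      field_simp at e1 ⊢
      linarith
    have hAc : ∀ x ∈ Set.Ioi (0:ℝ), A x = d / x - c / x ^ 2 := by
      intro x hx
      have hx0 : x ≠ 0 := ne_of_gt hx
      have := const_on_Ioi hG2 x hx
      simp only [one_mul] at this
      field_simp at this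
      rw [hddef]
      field_simp
      linear_combination this
    -- Step 3 : r^2 B' - 2 r B - d r^2 + 2(c+1) r = k
    have hB2rel : ∀ x ∈ Set.Ioi (0:ℝ),
        deriv (deriv B) x = 2 * A x - 2 * (1 - B x) / x ^ 2 := by
      intro x hx
      have hx0 : x ≠ 0 := ne_of_gt hx
      have h := hA x hx
      field_simp at h ⊢
      linear_combination -h
    have hG3 : ∀ x ∈ Set.Ioi (0:ℝ), HasDerivAt
        (fun x => x ^ 2 * deriv B x - 2 * x * B x - d * x ^ 2 + 2 * (c + 1) * x) 0 x := by
      intro x hx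
      have hx0 : x ≠ 0 := ne_of_gt hx
      have t1 := (hasDerivAt_pow 2 x).mul (hdB1 x hx).hasDerivAt
      have t2 := (((hasDerivAt_id x).const_mul 2).mul (hdB x hx).hasDerivAt)
      have t3 := (hasDerivAt_pow 2 x).const_mul d
      have t4 := (hasDerivAt_id x).const_mul (2 * (c + 1))
      have h2 := ((t1.sub t2).sub t3).add t4
      have h3 : HasDerivAt
          (fun x => x ^ 2 * deriv B x - 2 * x * B x - d * x ^ 2 + 2 * (c + 1) * x)
          (((↑2 * x ^ (2-1) * deriv B x + x ^ 2 * deriv (deriv B) x)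
            - (2 * 1 * B x + 2 * x * deriv B x)) - d * (↑2 * x ^ (2-1)) + 2 * (c + 1) * 1) x := by
        refine h2.congr_deriv ?_
        simp only [id]
        all_goals ring
      convert h3 using 1
      rw [hB2rel x hx, hAc x hx]
      push_cast
      field_simp
      ring
    obtain ⟨k, hkdef⟩ : ∃ k : ℝ, k = deriv B 1 - 2 * B 1 - d + 2 * (c + 1) := ⟨_, rfl⟩
    have hPk : ∀ x ∈ Set.Ioi (0:ℝ),
        x ^ 2 * deriv B x - 2 * x * B x - d * x ^ 2 + 2 * (c + 1) * x = k := by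
      intro x hx
      have := const_on_Ioi hG3 x hx
      rw [this, hkdef]
      norm_num
    -- Step 4
    obtain ⟨m, hmdef⟩ : ∃ m : ℝ, m = B 1 - (c + 1) + d + k / 3 := ⟨_, rfl⟩
    have hG4 : ∀ x ∈ Set.Ioi (0:ℝ), HasDerivAt
        (fun x => (B x - (c + 1) + d * x) / x ^ 2 + k / (3 * x ^ 3)) 0 x := by
      intro x hx
      have hx0 : x ≠ 0 := ne_of_gt hx
      have tN : HasDerivAt (fun x => B x - (c + 1) + d * x) (deriv B x + d) x := by
        have := ((hdB x hx).hasDerivAt.sub (hasDerivAt_const x (c + 1))).add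
          ((hasDerivAt_id x).const_mul d)
        refine this.congr_deriv ?_
        ring
      have t1 := tN.div (hasDerivAt_pow 2 x) (pow_ne_zero 2 hx0)
      have t2 : HasDerivAt (fun x : ℝ => k / (3 * x ^ 3)) (-(3 * k * (3 * x ^ 2)) / (3 * x ^ 3) ^ 2) x := by
        have := (hasDerivAt_const x k).div ((hasDerivAt_pow 3 x).const_mul 3)
          (by positivity : (3:ℝ) * x ^ 3 ≠ 0)
        refine this.congr_deriv ?_
        push_cast
        ring
      have h2 := t1.add t2
      refine h2.congr_deriv ?_
      have hPx := hPk x hx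
      have hdBx : deriv B x = (k + 2 * x * B x + d * x ^ 2 - 2 * (c + 1) * x) / x ^ 2 := by
        field_simp
        linarith
      rw [hdBx]
      push_cast
      field_simp
      ring
    have hQ : ∀ x ∈ Set.Ioi (0:ℝ),
        (B x - (c + 1) + d * x) / x ^ 2 + k / (3 * x ^ 3) = m := by
      intro x hx
      have := const_on_Ioi hG4 x hx
      rw [this, hmdef]
      norm_num
    have hpolyB : ∀ r : ℝ, 0 < r → B r = -k / 3 / r + (c + 1) + -d * r + m * r ^ 2 := by
      intro r hr
      have hr0 : r ≠ 0 := ne_of_gt hr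
      have hQr := hQ r hr
      have e2 : B r * (3 * r ^ 3) = (-k / 3 / r + (c + 1) + -d * r + m * r ^ 2) * (3 * r ^ 3) := by
        field_simp at hQr
        field_simp
        linear_combination hQr
      exact mul_right_cancel₀ (by positivity) e2
    refine ⟨-k / 3, c + 1, -d, m, ?_, hpolyB⟩
    have hvals := SD_vals B A E K S D (-k / 3) (c + 1) (-d) m hA hE hK hS hD hpolyB
    have h1 := (hvals 1 one_pos).2
    rw [hD0 1 one_pos] at h1
    norm_num at h1
    linear_combination (3 / 4 : ℝ) * h1
  · rintro ⟨bm1, b0, b1, b2, hcon, hpoly⟩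
    have h := SD_vals B A E K S D bm1 b0 b1 b2 hA hE hK hS hD hpoly
    refine ⟨fun r hr => (h r hr).1, fun r hr => ?_⟩
    have hz : -(4 / 3) * (1 - b0 ^ 2) - 4 * b1 * bm1 = 0 := by
      rw [hcon]; ring
    rw [(h r hr).2, hz, zero_div]
end

section
/- Let B : (0,∞) → ℝ be smooth and define A(r) = (1−B(r))/r² + B''(r)/2 and R(r) = 2(1−B(r))/r² − 4B'(r)/r − B''(r). Then A(r) = 0 and R(r) = 0 for all r > 0 if and only if there exists a constant b₋₁ ∈ ℝ such that B(r) = 1 + b₋₁/r for all r > 0. -/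
/-- `A ≡ 0` and `R ≡ 0` on `(0,∞)` (Ricci flatness) iff
`B(r) = 1 + b₋₁/r` (Schwarzschild). -/
theorem schwarzschild_iff
    (B : ℝ → ℝ) (hB : ContDiffOn ℝ (⊤ : ℕ∞) B (Set.Ioi 0)) :
    ((∀ r : ℝ, 0 < r → (1 - B r) / r ^ 2 + deriv (deriv B) r / 2 = 0) ∧
        (∀ r : ℝ, 0 < r →
          2 * (1 - B r) / r ^ 2 - 4 * deriv B r / r - deriv (deriv B) r = 0)) ↔
      (∃ bm1 : ℝ, ∀ r : ℝ, 0 < r → B r = 1 + bm1 / r) := by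
  constructor
  · rintro ⟨hA, hR⟩
    -- B differentiable on Ioi 0
    have hBd : ∀ r : ℝ, 0 < r → DifferentiableAt ℝ B r := by
      intro r hr
      have := (hB.contDiffAt (isOpen_Ioi.mem_nhds hr)).differentiableAt (by norm_num)
      exact this
    -- first-order ODE: deriv B r = (1 - B r) / r
    have hode : ∀ r : ℝ, 0 < r → deriv B r = (1 - B r) / r := by
      intro r hr
      have h1 := hA r hr
      have h2 := hR r hr
      have hr0 : r ≠ 0 := ne_of_gt hr
      field_simp at h1 h2 ⊢
      nlinarith [h1, h2]
    -- f r = r * (B r - 1) has derivative 0 on Ioi 0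
    set f : ℝ → ℝ := fun r => r * (B r - 1) with hf
    have hfd : ∀ r ∈ Set.Ioi (0:ℝ), HasDerivAt f 0 r := by
      intro r hr
      have hr' : (0:ℝ) < r := hr
      have h := (hasDerivAt_id r).mul ((hBd r hr').hasDerivAt.sub_const 1)
      have heq : 1 * (B r - 1) + r * deriv B r = 0 := by
        rw [hode r hr']
        field_simp
        ring
      simp only [id_eq] at h
      rw [hf]
      rw [heq] at h
      exact h
    have hconst : ∀ r : ℝ, 0 < r → f r = f 1 := by
      intro r hr
      have hconv : Convex ℝ (Set.Ioi (0:ℝ)) := convex_Ioi 0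
      refine hconv.is_const_of_fderivWithin_eq_zero (𝕜 := ℝ) ?_ ?_ hr (by norm_num)
      · intro x hx
        exact ((hfd x hx).differentiableAt).differentiableWithinAt
      · intro x hx
        rw [fderivWithin_of_isOpen isOpen_Ioi hx]
        have h2 := (hfd x hx).hasFDerivAt.fderiv
        rw [h2]
        ext
        simp
    refine ⟨B 1 - 1, fun r hr => ?_⟩
    have := hconst r hr
    simp only [hf] at this
    have hr0 : r ≠ 0 := ne_of_gt hr
    field_simp at this ⊢
    linarith [this]
  · rintro ⟨c, hc⟩
    -- derivative computations
    have hd1 : ∀ r : ℝ, 0 < r → deriv B r = -c / r ^ 2 := by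
      intro r hr
      have hev : B =ᶠ[nhds r] fun x => 1 + c / x := by
        filter_upwards [isOpen_Ioi.mem_nhds hr] with x hx using hc x hx
      have h := ((hasDerivAt_inv (ne_of_gt hr)).const_mul c).const_add 1
      rw [hev.deriv_eq]
      simp only [div_eq_mul_inv]
      rw [h.deriv]
      field_simp
    have hd2 : ∀ r : ℝ, 0 < r → deriv (deriv B) r = 2 * c / r ^ 3 := by
      intro r hr
      have hev : deriv B =ᶠ[nhds r] fun x => -c / x ^ 2 := by
        filter_upwards [isOpen_Ioi.mem_nhds hr] with x hx using hd1 x hx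
      rw [hev.deriv_eq]
      have hpow : HasDerivAt (fun x : ℝ => x ^ 2) (2 * r) r := by
        simpa using hasDerivAt_pow 2 r
      have h := (hpow.inv (pow_ne_zero 2 (ne_of_gt hr))).const_mul (-c)
      simp only [div_eq_mul_inv]
      rw [show deriv (fun x : ℝ => -c * (x ^ 2)⁻¹) r = _ from h.deriv]
      have hr0 : r ≠ 0 := ne_of_gt hr
      field_simp
    constructor
    · intro r hr
      rw [hc r hr, hd2 r hr]
      have hr0 : r ≠ 0 := ne_of_gt hr
      field_simp
      ring
    · intro r hr
      rw [hc r hr, hd1 r hr, hd2 r hr]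
      have hr0 : r ≠ 0 := ne_of_gt hr
      field_simp
      ring
end

section
/- Let c, d ∈ ℝ with d ≠ 0, let K, K₀, Q ∈ ℝ with Q² ≥ 0, and define on the set of r > 0 with cr + d > 0 the function B(r) = 1 + cK/(2d²) − K/(3dr) − [1 + cK/d² + 4Q²c²/d³]·[(c/d)r − (c/d)²r²·log((cr+d)/r)] + (Q²/d)·[1/r² − 4c/(3dr) + 2c²/d²] + K₀r². Then for all such r, (cr+d)·[(1−B(r))/r² + B''(r)/2] + c·[B'(r)/2 − B(r)/r] = 2Q²/r⁴. -/
/-- The Hollenstein–Lobo metric function of `f(R)` gravity coupled to linear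
electrodynamics with dyonic charge `Q` and `f_R = cr + d`. -/
noncomputable def hollensteinLoboB (c d K K₀ Q : ℝ) (r : ℝ) : ℝ :=
  1 + c * K / (2 * d ^ 2) - K / (3 * d * r)
    - (1 + c * K / d ^ 2 + 4 * Q ^ 2 * c ^ 2 / d ^ 3) *
        ((c / d) * r - (c / d) ^ 2 * r ^ 2 * Real.log ((c * r + d) / r))
    + (Q ^ 2 / d) * (1 / r ^ 2 - 4 * c / (3 * d * r) + 2 * c ^ 2 / d ^ 2)
    + K₀ * r ^ 2

/-- First derivative of the Hollenstein–Lobo metric function. -/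
noncomputable def hollensteinLoboB' (c d K K₀ Q : ℝ) (r : ℝ) : ℝ :=
  K / (3 * d * r ^ 2)
    - (1 + c * K / d ^ 2 + 4 * Q ^ 2 * c ^ 2 / d ^ 3) *
        (c / d - (c / d) ^ 2 *
          (2 * r * Real.log ((c * r + d) / r) - r * d / (c * r + d)))
    + (Q ^ 2 / d) * (-2 / r ^ 3 + 4 * c / (3 * d * r ^ 2))
    + 2 * K₀ * r

/-- Second derivative of the Hollenstein–Lobo metric function. -/
noncomputable def hollensteinLoboB'' (c d K K₀ Q : ℝ) (r : ℝ) : ℝ :=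
  -2 * K / (3 * d * r ^ 3)
    + (1 + c * K / d ^ 2 + 4 * Q ^ 2 * c ^ 2 / d ^ 3) * (c / d) ^ 2 *
        (2 * Real.log ((c * r + d) / r) + 2 * r * c / (c * r + d) - 2
          - d ^ 2 / (c * r + d) ^ 2)
    + (Q ^ 2 / d) * (6 / r ^ 4 - 8 * c / (3 * d * r ^ 3))
    + 2 * K₀

lemma hasDerivAt_log_aux (c d : ℝ) {r : ℝ} (hr : r ≠ 0) (hcd : c * r + d ≠ 0) :
    HasDerivAt (fun r => Real.log ((c * r + d) / r))
      (-d / (r * (c * r + d))) r := by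
  have hnum : HasDerivAt (fun x : ℝ => c * x + d) c r := by
    simpa using ((hasDerivAt_id r).const_mul c).add_const d
  have hq : HasDerivAt (fun x : ℝ => (c * x + d) / x)
      ((c * r - (c * r + d) * 1) / r ^ 2) r := hnum.div (hasDerivAt_id r) hr
  have hne : (c * r + d) / r ≠ 0 := div_ne_zero hcd hr
  have := hq.log hne
  convert this using 1
  field_simp
  ring

set_option maxHeartbeats 1000000 in
lemma hasDerivAt_B (c d K K₀ Q : ℝ) {r : ℝ} (hr : r ≠ 0) (hcd : c * r + d ≠ 0)
    (hd : d ≠ 0) :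
    HasDerivAt (hollensteinLoboB c d K K₀ Q) (hollensteinLoboB' c d K K₀ Q r) r := by
  have h3d : (3 : ℝ) * d ≠ 0 := by positivity
  have h3dr : (3 : ℝ) * d * r ≠ 0 := mul_ne_zero h3d hr
  have hL := hasDerivAt_log_aux c d hr hcd
  have hlin : HasDerivAt (fun x : ℝ => 3 * d * x) (3 * d) r := by
    simpa using (hasDerivAt_id r).const_mul (3 * d)
  -- term: K / (3*d*r)
  have h1 : HasDerivAt (fun x : ℝ => K / (3 * d * x))
      ((0 * (3 * d * r) - K * (3 * d)) / (3 * d * r) ^ 2) r :=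
    (hasDerivAt_const r K).div hlin h3dr
  -- term: r ^ 2
  have hr2 : HasDerivAt (fun x : ℝ => x ^ 2) (2 * r) r := by
    simpa using hasDerivAt_pow 2 r
  -- term: (c/d)^2 * r^2 * log(...)
  have hc2 : HasDerivAt (fun x : ℝ => (c / d) ^ 2 * x ^ 2) ((c / d) ^ 2 * (2 * r)) r :=
    hr2.const_mul _
  have hmul : HasDerivAt (fun x : ℝ => (c / d) ^ 2 * x ^ 2 * Real.log ((c * x + d) / x))
      ((c / d) ^ 2 * (2 * r) * Real.log ((c * r + d) / r)
        + (c / d) ^ 2 * r ^ 2 * (-d / (r * (c * r + d)))) r := hc2.mul hL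
  -- term: (c/d)*r
  have hA : HasDerivAt (fun x : ℝ => (c / d) * x) (c / d) r := by
    simpa using (hasDerivAt_id r).const_mul (c / d)
  have hM : HasDerivAt
      (fun x : ℝ => (1 + c * K / d ^ 2 + 4 * Q ^ 2 * c ^ 2 / d ^ 3) *
        ((c / d) * x - (c / d) ^ 2 * x ^ 2 * Real.log ((c * x + d) / x)))
      ((1 + c * K / d ^ 2 + 4 * Q ^ 2 * c ^ 2 / d ^ 3) *
        (c / d - ((c / d) ^ 2 * (2 * r) * Real.log ((c * r + d) / r)
          + (c / d) ^ 2 * r ^ 2 * (-d / (r * (c * r + d)))))) r :=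
    (hA.sub hmul).const_mul _
  -- term: 1/r^2
  have hinv : HasDerivAt (fun x : ℝ => 1 / x ^ 2)
      ((0 * r ^ 2 - 1 * (2 * r)) / (r ^ 2) ^ 2) r :=
    (hasDerivAt_const r 1).div hr2 (pow_ne_zero 2 hr)
  -- term: 4*c/(3*d*r)
  have h4c : HasDerivAt (fun x : ℝ => 4 * c / (3 * d * x))
      ((0 * (3 * d * r) - 4 * c * (3 * d)) / (3 * d * r) ^ 2) r :=
    (hasDerivAt_const r (4 * c)).div hlin h3dr
  have hQt : HasDerivAt
      (fun x : ℝ => (Q ^ 2 / d) * (1 / x ^ 2 - 4 * c / (3 * d * x) + 2 * c ^ 2 / d ^ 2))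
      ((Q ^ 2 / d) * ((0 * r ^ 2 - 1 * (2 * r)) / (r ^ 2) ^ 2
        - (0 * (3 * d * r) - 4 * c * (3 * d)) / (3 * d * r) ^ 2)) r :=
    ((hinv.sub h4c).add_const (2 * c ^ 2 / d ^ 2)).const_mul _
  have hK0 : HasDerivAt (fun x : ℝ => K₀ * x ^ 2) (K₀ * (2 * r)) r := hr2.const_mul _
  have htot := ((((hasDerivAt_const r (1 + c * K / (2 * d ^ 2))).sub h1).sub hM).add
    hQt).add hK0
  have heq : hollensteinLoboB c d K K₀ Q = fun x : ℝ =>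
      1 + c * K / (2 * d ^ 2) - K / (3 * d * x)
        - (1 + c * K / d ^ 2 + 4 * Q ^ 2 * c ^ 2 / d ^ 3) *
            ((c / d) * x - (c / d) ^ 2 * x ^ 2 * Real.log ((c * x + d) / x))
        + (Q ^ 2 / d) * (1 / x ^ 2 - 4 * c / (3 * d * x) + 2 * c ^ 2 / d ^ 2)
        + K₀ * x ^ 2 := rfl
  rw [heq]
  convert htot using 1
  · rfl
  · rfl
  · rfl
  unfold hollensteinLoboB'
  field_simp
  ring

set_option maxHeartbeats 1000000 in
lemma hasDerivAt_B' (c d K K₀ Q : ℝ) {r : ℝ} (hr : r ≠ 0) (hcd : c * r + d ≠ 0)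
    (hd : d ≠ 0) :
    HasDerivAt (hollensteinLoboB' c d K K₀ Q) (hollensteinLoboB'' c d K K₀ Q r) r := by
  have h3d : (3 : ℝ) * d ≠ 0 := by positivity
  have hL := hasDerivAt_log_aux c d hr hcd
  have hr2 : HasDerivAt (fun x : ℝ => x ^ 2) (2 * r) r := by
    simpa using hasDerivAt_pow 2 r
  have hr3 : HasDerivAt (fun x : ℝ => x ^ 3) (3 * r ^ 2) r := by
    simpa using hasDerivAt_pow 3 r
  have hlin2 : HasDerivAt (fun x : ℝ => 3 * d * x ^ 2) (3 * d * (2 * r)) r :=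
    hr2.const_mul _
  have h3dr2 : (3 : ℝ) * d * r ^ 2 ≠ 0 := mul_ne_zero h3d (pow_ne_zero 2 hr)
  have hnum : HasDerivAt (fun x : ℝ => c * x + d) c r := by
    simpa using ((hasDerivAt_id r).const_mul c).add_const d
  -- term: K / (3*d*r^2)
  have h1 : HasDerivAt (fun x : ℝ => K / (3 * d * x ^ 2))
      ((0 * (3 * d * r ^ 2) - K * (3 * d * (2 * r))) / (3 * d * r ^ 2) ^ 2) r :=
    (hasDerivAt_const r K).div hlin2 h3dr2
  -- term: 2*x*log(...)
  have h2x : HasDerivAt (fun x : ℝ => 2 * x) 2 r := by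
    simpa using (hasDerivAt_id r).const_mul (2 : ℝ)
  have hmul : HasDerivAt (fun x : ℝ => 2 * x * Real.log ((c * x + d) / x))
      (2 * Real.log ((c * r + d) / r)
        + 2 * r * (-d / (r * (c * r + d)))) r := h2x.mul hL
  -- term: x*d/(c*x+d)
  have hxd : HasDerivAt (fun x : ℝ => x * d) d r := by
    simpa using (hasDerivAt_id r).mul_const d
  have hfrac : HasDerivAt (fun x : ℝ => x * d / (c * x + d))
      ((d * (c * r + d) - r * d * c) / (c * r + d) ^ 2) r := hxd.div hnum hcd
  have hinner := (hmul.sub hfrac).const_mul ((c / d) ^ 2)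
  have hM : HasDerivAt
      (fun x : ℝ => (1 + c * K / d ^ 2 + 4 * Q ^ 2 * c ^ 2 / d ^ 3) *
        (c / d - (c / d) ^ 2 *
          (2 * x * Real.log ((c * x + d) / x) - x * d / (c * x + d))))
      ((1 + c * K / d ^ 2 + 4 * Q ^ 2 * c ^ 2 / d ^ 3) *
        (0 - (c / d) ^ 2 * (2 * Real.log ((c * r + d) / r)
          + 2 * r * (-d / (r * (c * r + d)))
          - (d * (c * r + d) - r * d * c) / (c * r + d) ^ 2))) r :=
    ((hasDerivAt_const r (c / d)).sub hinner).const_mul _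
  -- term: -2/x^3
  have hm2 : HasDerivAt (fun x : ℝ => -2 / x ^ 3)
      ((0 * r ^ 3 - -2 * (3 * r ^ 2)) / (r ^ 3) ^ 2) r :=
    (hasDerivAt_const r (-2)).div hr3 (pow_ne_zero 3 hr)
  -- term: 4*c/(3*d*x^2)
  have h4c : HasDerivAt (fun x : ℝ => 4 * c / (3 * d * x ^ 2))
      ((0 * (3 * d * r ^ 2) - 4 * c * (3 * d * (2 * r))) / (3 * d * r ^ 2) ^ 2) r :=
    (hasDerivAt_const r (4 * c)).div hlin2 h3dr2
  have hQt := (hm2.add h4c).const_mul (Q ^ 2 / d)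
  have hK0 : HasDerivAt (fun x : ℝ => 2 * K₀ * x) (2 * K₀) r := by
    simpa using (hasDerivAt_id r).const_mul (2 * K₀)
  have htot := (((h1.sub hM).add hQt).add hK0)
  have heq : hollensteinLoboB' c d K K₀ Q = fun x : ℝ =>
      K / (3 * d * x ^ 2)
        - (1 + c * K / d ^ 2 + 4 * Q ^ 2 * c ^ 2 / d ^ 3) *
            (c / d - (c / d) ^ 2 *
              (2 * x * Real.log ((c * x + d) / x) - x * d / (c * x + d)))
        + (Q ^ 2 / d) * (-2 / x ^ 3 + 4 * c / (3 * d * x ^ 2))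
        + 2 * K₀ * x := rfl
  rw [heq]
  convert htot using 1
  · rfl
  · rfl
  · rfl
  unfold hollensteinLoboB''
  have hcd' : r * c + d ≠ 0 := by rw [mul_comm]; exact hcd
  field_simp
  ring

set_option maxHeartbeats 1000000 in
/-- The Hollenstein–Lobo function solves the `f(R)`-gravity field
equation `(cr+d)[(1−B)/r² + B''/2] + c[B'/2 − B/r] = 2Q²/r⁴` wherever `r > 0` and
`cr + d > 0`. -/
theorem hollenstein_lobo_solution
    (c d K K₀ Q : ℝ) (hd : d ≠ 0) (hQ : Q ^ 2 ≥ 0) :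
    ∀ r : ℝ, 0 < r → 0 < c * r + d →
      (c * r + d) *
          ((1 - hollensteinLoboB c d K K₀ Q r) / r ^ 2
            + deriv (deriv (hollensteinLoboB c d K K₀ Q)) r / 2)
        + c * (deriv (hollensteinLoboB c d K K₀ Q) r / 2
            - hollensteinLoboB c d K K₀ Q r / r) = 2 * Q ^ 2 / r ^ 4 := by
  intro r hr hcd
  have hr0 : r ≠ 0 := ne_of_gt hr
  have hcd0 : c * r + d ≠ 0 := ne_of_gt hcd
  -- the domain is open
  have hS : IsOpen {x : ℝ | 0 < x ∧ 0 < c * x + d} := by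
    have : {x : ℝ | 0 < x ∧ 0 < c * x + d}
        = Set.Ioi 0 ∩ (fun x : ℝ => c * x + d) ⁻¹' Set.Ioi 0 := rfl
    rw [this]
    exact isOpen_Ioi.inter (isOpen_Ioi.preimage (by continuity))
  have hmem : {x : ℝ | 0 < x ∧ 0 < c * x + d} ∈ nhds r := hS.mem_nhds ⟨hr, hcd⟩
  have hEq : deriv (hollensteinLoboB c d K K₀ Q) =ᶠ[nhds r]
      hollensteinLoboB' c d K K₀ Q :=
    Filter.eventuallyEq_of_mem hmem
      (fun x hx => (hasDerivAt_B c d K K₀ Q (ne_of_gt hx.1) (ne_of_gt hx.2) hd).deriv)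
  have hd2 : deriv (deriv (hollensteinLoboB c d K K₀ Q)) r
      = hollensteinLoboB'' c d K K₀ Q r := by
    rw [hEq.deriv_eq]
    exact (hasDerivAt_B' c d K K₀ Q hr0 hcd0 hd).deriv
  have hd1 : deriv (hollensteinLoboB c d K K₀ Q) r
      = hollensteinLoboB' c d K K₀ Q r :=
    (hasDerivAt_B c d K K₀ Q hr0 hcd0 hd).deriv
  rw [hd1, hd2]
  unfold hollensteinLoboB hollensteinLoboB' hollensteinLoboB''
  field_simp
  ring
end

section
/- Let B : (0,∞) → ℝ be smooth and define A(r) = (1−B(r))/r² + B''(r)/2 and E(r) = (1/2)[(1−B(r))/r² + B'(r)/r − B''(r)/2]. Then A(r) = 0 and E(r) = 0 for all r > 0 if and only if there exists a constant b₂ ∈ ℝ such that B(r) = 1 + b₂r² for all r > 0. -/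
/-- `A ≡ 0` (Einstein) and `E ≡ 0` (conformally flat) on `(0,∞)` iff
`B(r) = 1 + b₂r²` (constant curvature, de Sitter / anti-de Sitter). -/
theorem constant_curvature_iff
    (B : ℝ → ℝ) (hB : ContDiffOn ℝ (⊤ : ℕ∞) B (Set.Ioi 0)) :
    ((∀ r : ℝ, 0 < r → (1 - B r) / r ^ 2 + deriv (deriv B) r / 2 = 0) ∧
        (∀ r : ℝ, 0 < r →
          (1 / 2) * ((1 - B r) / r ^ 2 + deriv B r / r - deriv (deriv B) r / 2) = 0)) ↔
      (∃ b2 : ℝ, ∀ r : ℝ, 0 < r → B r = 1 + b2 * r ^ 2) := by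
  have hopen : IsOpen (Set.Ioi (0:ℝ)) := isOpen_Ioi
  constructor
  · rintro ⟨h1, h2⟩
    -- deduce the first-order ODE : deriv B r = 2 (B r - 1) / r
    have hode : ∀ r : ℝ, 0 < r → deriv B r = 2 * (B r - 1) / r := by
      intro r hr
      have hr2 : (r:ℝ) ^ 2 ≠ 0 := pow_ne_zero _ hr.ne'
      have e1 := h1 r hr
      have e2 := h2 r hr
      field_simp at e1 e2 ⊢
      nlinarith [e1, e2]
    -- g = (B - 1)/r² has derivative 0
    set g : ℝ → ℝ := fun r => (B r - 1) / r ^ 2 with hg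
    have hdiffB : ∀ r : ℝ, 0 < r → DifferentiableAt ℝ B r := by
      intro r hr
      exact ((hB.differentiableOn (by simp)).differentiableAt (hopen.mem_nhds hr))
    have hgd : ∀ r : ℝ, 0 < r → HasDerivAt g 0 r := by
      intro r hr
      have hBd : HasDerivAt B (2 * (B r - 1) / r) r := by
        have := (hdiffB r hr).hasDerivAt
        rwa [hode r hr] at this
      have h2 : HasDerivAt (fun r : ℝ => r ^ 2) (2 * r) r := by
        simpa [mul_comm] using (hasDerivAt_pow 2 r)
      have := (hBd.sub_const 1).div h2 (pow_ne_zero 2 hr.ne')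
      refine this.congr_deriv ?_
      field_simp [hr.ne']
      ring
    have hconst : ∀ x : ℝ, 0 < x → g x = g 1 := by
      intro x hx
      refine (convex_Ioi (0:ℝ)).is_const_of_fderivWithin_eq_zero
        (fun y hy => ((hgd y hy).differentiableAt.differentiableWithinAt)) ?_ hx (by norm_num)
      intro y hy
      rw [fderivWithin_of_isOpen hopen hy]
      rw [(hgd y hy).hasFDerivAt.fderiv]
      ext
      simp
    refine ⟨g 1, fun r hr => ?_⟩
    have := hconst r hr
    have hr2 : (r:ℝ) ^ 2 ≠ 0 := pow_ne_zero _ hr.ne'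
    simp only [g, one_pow, div_one] at this
    rw [div_eq_iff hr2] at this
    simp only [g, one_pow, div_one]
    linarith
  · rintro ⟨b2, hb⟩
    have hBev : ∀ r : ℝ, 0 < r → B =ᶠ[nhds r] fun x => 1 + b2 * x ^ 2 := by
      intro r hr
      filter_upwards [hopen.mem_nhds hr] with x hx using hb x hx
    have hd1 : ∀ r : ℝ, 0 < r → deriv B r = 2 * b2 * r := by
      intro r hr
      rw [(hBev r hr).deriv_eq]
      have : HasDerivAt (fun x : ℝ => 1 + b2 * x ^ 2) (2 * b2 * r) r := by
        have := ((hasDerivAt_pow 2 r).const_mul b2).const_add 1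
        refine this.congr_deriv ?_
        norm_num
        ring
      exact this.deriv
    have hd2 : ∀ r : ℝ, 0 < r → deriv (deriv B) r = 2 * b2 := by
      intro r hr
      have hev : deriv B =ᶠ[nhds r] fun x => 2 * b2 * x := by
        filter_upwards [hopen.mem_nhds hr] with x hx using hd1 x hx
      rw [hev.deriv_eq]
      simpa using ((hasDerivAt_id r).const_mul (2 * b2)).deriv
    constructor
    · intro r hr
      rw [hb r hr, hd2 r hr]
      have : (r:ℝ) ^ 2 ≠ 0 := pow_ne_zero _ hr.ne'
      field_simp
      ring
    · intro r hr
      rw [hb r hr, hd1 r hr, hd2 r hr]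
      have : (r:ℝ) ^ 2 ≠ 0 := pow_ne_zero _ hr.ne'
      field_simp
      ring
end
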